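/- arXiv:1508.01858 — 4 statements merged into one kernel-verified Lean document; each statement's English description precedes it below -/
import Mathlib

section
/- For every nonnegative integer n, the n-th Cauchy-Carlitz number satisfies CC_n = Σ_{j ≥ 0, r^j − 1 ≤ n} (1/L_j) · S1_C(n, r^j − 1), where S1_C denotes the Stirling-Carlitz numbers of the first kind (the sum is finite since S1_C(n, m) = 0 whenever n < m). -/
/-!
Since `e_C (log_C z) = z`, the series `z / log_C z` equals `Σ_j log_C(z)^(r^j - 1) / D_j`, and
`D_j = L_j · Π(r^j - 1)` because every base-`r` digit of `r^j - 1` is `r - 1`; comparing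
coefficients with the definition of `S1_C` gives the formula.

The identity `e_C ∘ log_C = id` is checked coefficientwise. By Frobenius,
`log_C(z)^(r^i) = Σ_k ((-1)^k / L_k)^(r^i) z^(r^(i+k))`, so the coefficient of `z^(r^m)` in
`e_C (log_C z)` is `A_m = Σ_{i+k=m} (-1)^k / (D_i L_k^(r^i))`. The additivity
`[i+k] = [i] + [k]^(r^i)` yields `[m+1] A_(m+1) = A_m^r - A_m`, whence `A_m = 0` for `m > 0`.
-/

open scoped Classical
open PowerSeries Finset

noncomputable section

variable (F : Type) [Field F] [Fintype F]

/-- The rational function field `K = 𝔽_r(T)`. -/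
abbrev K : Type := RatFunc F

/-- `r`, the cardinality of the finite field of constants. -/
def rr : ℕ := Fintype.card F

/-- The variable `T` of the rational function field. -/
def Tv : K F := RatFunc.X

/-- `[i] = T^{r^i} - T`. -/
def br (i : ℕ) : K F := Tv F ^ (rr F) ^ i - Tv F

/-- `D_0 = 1`, `D_i = [i] · D_{i-1}^r`. -/
def D : ℕ → K F
  | 0 => 1
  | i + 1 => br F (i + 1) * D i ^ rr F

/-- `L_0 = 1`, `L_i = [i] · L_{i-1}`. -/
def L : ℕ → K F
  | 0 => 1
  | i + 1 => br F (i + 1) * L i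

/-- The Carlitz factorial `Π(n) = ∏_j D_j^{c_j}`, where `c_j = n / r^j % r` are the
base-`r` digits of `n` (all digits with index `> n` vanish since `r ≥ 2`). -/
def Cf (n : ℕ) : K F := ∏ j ∈ Finset.range (n + 1), D F j ^ (n / (rr F) ^ j % rr F)

/-- The Carlitz logarithm `log_C(z) = Σ_{i ≥ 0} (-1)^i z^{r^i} / L_i`: the coefficient of
`z^m` is `(-1)^i / L_i` if `m = r^i` and `0` otherwise (note `i ≤ r^i = m` since `r ≥ 2`). -/
def logC : PowerSeries (K F) :=
  PowerSeries.mk fun m =>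
    ∑ i ∈ Finset.range (m + 1), if m = (rr F) ^ i then (-1 : K F) ^ i / L F i else 0

/-- The Carlitz exponential `e_C(z) = Σ_{i ≥ 0} z^{r^i} / D_i`. -/
def eC : PowerSeries (K F) :=
  PowerSeries.mk fun m =>
    ∑ i ∈ Finset.range (m + 1), if m = (rr F) ^ i then 1 / D F i else 0

/-- The power series `log_C(z)/z`. -/
def logCdivZ : PowerSeries (K F) :=
  PowerSeries.mk fun n => PowerSeries.coeff (n + 1) (logC F)

/-- The power series `e_C(z)/z`. -/
def eCdivZ : PowerSeries (K F) :=
  PowerSeries.mk fun n => PowerSeries.coeff (n + 1) (eC F)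

namespace FiniteField

variable {k R : Type*} [Field k] [Fintype k] [CommRing R] [Algebra k R]

theorem frobeniusAlgHom_pow_apply (n : ℕ) (x : R) :
    (frobeniusAlgHom k R ^ n) x = x ^ Fintype.card k ^ n := by
  rw [AlgHom.coe_pow, coe_frobeniusAlgHom, pow_iterate]

theorem sub_pow_card_pow (x y : R) (n : ℕ) :
    (x - y) ^ Fintype.card k ^ n = x ^ Fintype.card k ^ n - y ^ Fintype.card k ^ n := by
  simpa only [frobeniusAlgHom_pow_apply] using map_sub (frobeniusAlgHom k R ^ n) x y

theorem sum_pow_card {ι : Type*} (s : Finset ι) (f : ι → R) :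
    (∑ i ∈ s, f i) ^ Fintype.card k = ∑ i ∈ s, f i ^ Fintype.card k :=
  map_sum (frobeniusAlgHom k R) f s

theorem neg_one_pow_pow_card_pow (a n : ℕ) :
    ((-1 : R) ^ a) ^ Fintype.card k ^ n = (-1) ^ a := by
  rw [← map_one (algebraMap k R), ← map_neg, ← map_pow, ← map_pow, pow_card_pow]

theorem _root_.PowerSeries.coeff_pow_card_pow (f : PowerSeries R) (n m : ℕ) :
    coeff m (f ^ Fintype.card k ^ n) =
      if Fintype.card k ^ n ∣ m then coeff (m / Fintype.card k ^ n) f ^ Fintype.card k ^ n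
      else 0 := by
  nontriviality R
  obtain ⟨p, _, e, hp, hcard⟩ := card' k
  have : Fact p.Prime := ⟨hp⟩
  have : CharP R p := charP_of_injective_algebraMap' k p
  rw [hcard, ← pow_mul, ← MvPowerSeries.map_iterateFrobenius_expand p hp.ne_zero f]
  change coeff m (PowerSeries.map _ (PowerSeries.expand _ _ f)) = _
  rw [PowerSeries.coeff_map, PowerSeries.coeff_expand]
  split_ifs <;> simp [iterateFrobenius_def, hp.ne_zero]

end FiniteField

theorem Nat.pow_sub_one_div_pow_mod {b : ℕ} (hb : 0 < b) (i j : ℕ) :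
    (b ^ i - 1) / b ^ j % b = if j < i then b - 1 else 0 := by
  split_ifs with hji
  · obtain ⟨t, rfl⟩ := Nat.exists_eq_add_of_lt hji
    have hdigits : b ^ (j + t + 1) - 1 = (b ^ j - 1) + b ^ j * ((b - 1) + b * (b ^ t - 1)) := by
      zify [Nat.one_le_pow _ b hb, hb]
      ring
    rw [hdigits, Nat.add_mul_div_left _ _ (pow_pos hb j),
      Nat.div_eq_of_lt (Nat.sub_lt (pow_pos hb j) one_pos), zero_add, Nat.add_mul_mod_self_left,
      Nat.mod_eq_of_lt (Nat.sub_lt hb one_pos)]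
  · rw [Nat.div_eq_of_lt, Nat.zero_mod]
    exact (Nat.sub_lt (pow_pos hb i) one_pos).trans_le (Nat.pow_le_pow_right hb (not_lt.mp hji))

open FiniteField

lemma one_lt_rr : 1 < rr F := Fintype.one_lt_card

lemma lt_rr_pow (k : ℕ) : k < rr F ^ k := Nat.lt_pow_self (one_lt_rr F)

lemma rr_pow_injective : Function.Injective (rr F ^ ·) :=
  Nat.pow_right_injective (one_lt_rr F)

lemma br_zero : br F 0 = 0 := by rw [br, pow_zero, pow_one, sub_self]

lemma br_ne_zero {m : ℕ} (hm : m ≠ 0) : br F m ≠ 0 := by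
  have h : br F m = algebraMap (Polynomial F) (K F) (.X ^ rr F ^ m - .X) := by
    simp [br, Tv, RatFunc.algebraMap_X]
  rw [h, map_ne_zero_iff _ (IsFractionRing.injective (Polynomial F) (K F))]
  exact X_pow_card_pow_sub_X_ne_zero F hm (one_lt_rr F)

lemma br_add (i k : ℕ) : br F (i + k) = br F i + br F k ^ rr F ^ i := by
  rw [br, br, br, rr, sub_pow_card_pow, ← pow_mul, ← pow_add, add_comm k i]
  ring

lemma D_ne_zero (i : ℕ) : D F i ≠ 0 := by
  induction i with
  | zero => exact one_ne_zero
  | succ k ih => exact mul_ne_zero (br_ne_zero F k.succ_ne_zero) (pow_ne_zero _ ih)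

lemma L_ne_zero (i : ℕ) : L F i ≠ 0 := by
  induction i with
  | zero => exact one_ne_zero
  | succ k ih => exact mul_ne_zero (br_ne_zero F k.succ_ne_zero) ih

lemma Cf_ne_zero (n : ℕ) : Cf F n ≠ 0 :=
  prod_ne_zero_iff.mpr fun j _ => pow_ne_zero _ (D_ne_zero F j)

lemma neg_one_pow_pow_rr_pow (a i : ℕ) : ((-1 : K F) ^ a) ^ rr F ^ i = (-1) ^ a :=
  neg_one_pow_pow_card_pow a i

-- The coefficient of `z ^ r ^ (i + k)` in `log_C(z) ^ r ^ i / D_i`.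
def expLogTerm (i k : ℕ) : K F := (-1) ^ k / (D F i * L F k ^ rr F ^ i)

lemma br_mul_expLogTerm_succ_left (i k : ℕ) :
    br F (i + 1) * expLogTerm F (i + 1) k = expLogTerm F i k ^ rr F := by
  have := br_ne_zero F i.succ_ne_zero
  have := D_ne_zero F i
  have := L_ne_zero F k
  have hsign : ((-1 : K F) ^ k) ^ rr F = (-1) ^ k := by
    simpa only [pow_one] using neg_one_pow_pow_rr_pow F k 1
  rw [expLogTerm, expLogTerm, D, div_pow, hsign, mul_pow, ← pow_mul, ← pow_succ]
  field_simp

lemma br_pow_mul_expLogTerm_succ_right (i k : ℕ) :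
    br F (k + 1) ^ rr F ^ i * expLogTerm F i (k + 1) = - expLogTerm F i k := by
  have := pow_ne_zero (rr F ^ i) (br_ne_zero F k.succ_ne_zero)
  have := D_ne_zero F i
  have := L_ne_zero F k
  rw [expLogTerm, expLogTerm, L, mul_pow, pow_succ]
  field_simp

-- The coefficient of `z ^ r ^ m` in `e_C(log_C(z))`.
def expLogCoeff (m : ℕ) : K F := ∑ p ∈ antidiagonal m, expLogTerm F p.1 p.2

lemma expLogCoeff_zero : expLogCoeff F 0 = 1 := by
  simp [expLogCoeff, expLogTerm, D, L]

lemma br_mul_expLogCoeff_succ (m : ℕ) :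
    br F (m + 1) * expLogCoeff F (m + 1) = expLogCoeff F m ^ rr F - expLogCoeff F m := by
  have hfrob : expLogCoeff F m ^ rr F = ∑ p ∈ antidiagonal m, expLogTerm F p.1 p.2 ^ rr F :=
    sum_pow_card _ _
  calc br F (m + 1) * expLogCoeff F (m + 1)
      = ∑ p ∈ antidiagonal (m + 1), br F p.1 * expLogTerm F p.1 p.2
        + ∑ p ∈ antidiagonal (m + 1), br F p.2 ^ rr F ^ p.1 * expLogTerm F p.1 p.2 := by
        rw [expLogCoeff, mul_sum, ← sum_add_distrib]
        refine sum_congr rfl fun p hp => ?_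
        rw [← add_mul, ← br_add, mem_antidiagonal.mp hp]
    _ = expLogCoeff F m ^ rr F - expLogCoeff F m := by
        rw [Nat.sum_antidiagonal_succ, Nat.sum_antidiagonal_succ', hfrob, expLogCoeff, br_zero,
          zero_pow (pow_ne_zero _ (one_lt_rr F).ne_bot)]
        simp only [zero_mul, zero_add, br_mul_expLogTerm_succ_left,
          br_pow_mul_expLogTerm_succ_right, sum_neg_distrib, sub_eq_add_neg]

lemma expLogCoeff_succ (m : ℕ) : expLogCoeff F (m + 1) = 0 := by
  induction m with
  | zero => simpa [expLogCoeff_zero, br_ne_zero F one_ne_zero] using br_mul_expLogCoeff_succ F 0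
  | succ m ih =>
    simpa [ih, br_ne_zero F (m + 1).succ_ne_zero, zero_pow (one_lt_rr F).ne_bot] using
      br_mul_expLogCoeff_succ F (m + 1)

lemma coeff_logC_rr_pow (k : ℕ) : coeff (rr F ^ k) (logC F) = (-1) ^ k / L F k := by
  rw [logC, coeff_mk, sum_eq_single_of_mem k (mem_range.mpr (by linarith [lt_rr_pow F k]))]
  · exact if_pos rfl
  · exact fun j _ hjk => if_neg fun h => hjk (rr_pow_injective F h).symm

lemma coeff_logC_of_forall_ne {m : ℕ} (hm : ∀ k, m ≠ rr F ^ k) : coeff m (logC F) = 0 := by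
  rw [logC, coeff_mk]
  exact sum_eq_zero fun k _ => if_neg (hm k)

lemma coeff_pow_rr_pow (f : (K F)⟦X⟧) (i m : ℕ) :
    coeff m (f ^ rr F ^ i) = if rr F ^ i ∣ m then coeff (m / rr F ^ i) f ^ rr F ^ i else 0 :=
  coeff_pow_card_pow f i m

lemma coeff_logC_pow_rr_pow (i m : ℕ) :
    coeff (rr F ^ m) (logC F ^ rr F ^ i) =
      if i ≤ m then ((-1) ^ (m - i) / L F (m - i)) ^ rr F ^ i else 0 := by
  simp only [coeff_pow_rr_pow, Nat.pow_dvd_pow_iff_le_right (one_lt_rr F)]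
  split_ifs with him
  · rw [Nat.pow_div him (one_lt_rr F).le, coeff_logC_rr_pow]
  · rfl

lemma coeff_logC_pow_rr_pow_of_forall_ne (i : ℕ) {n : ℕ} (hn : ∀ k, n ≠ rr F ^ k) :
    coeff n (logC F ^ rr F ^ i) = 0 := by
  rw [coeff_pow_rr_pow]
  split_ifs with hdvd
  · obtain ⟨c, rfl⟩ := hdvd
    rw [Nat.mul_div_cancel_left c (pow_pos (one_lt_rr F).le i),
      coeff_logC_of_forall_ne F fun k hc => hn (i + k) (by rw [hc, pow_add]),
      zero_pow (pow_ne_zero _ (one_lt_rr F).ne_bot)]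
  · rfl

-- `e_C(log_C(z)) = z`, coefficientwise.
lemma sum_coeff_logC_pow_rr_pow_div_D (n : ℕ) :
    ∑ j ∈ range (n + 1), coeff n (logC F ^ rr F ^ j) / D F j = coeff n (X : (K F)⟦X⟧) := by
  by_cases hn : ∃ m, n = rr F ^ m
  · obtain ⟨m, rfl⟩ := hn
    have hterm : ∀ j ∈ range (m + 1),
        coeff (rr F ^ m) (logC F ^ rr F ^ j) / D F j = expLogTerm F j (m - j) := by
      intro j hj
      rw [coeff_logC_pow_rr_pow, if_pos (Nat.lt_succ_iff.mp (mem_range.mp hj)), expLogTerm,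
        div_pow, neg_one_pow_pow_rr_pow, div_div, mul_comm]
    have hsub : range (m + 1) ⊆ range (rr F ^ m + 1) :=
      range_subset_range.mpr (by linarith [lt_rr_pow F m])
    rw [← sum_subset hsub, sum_congr rfl hterm,
      ← Nat.sum_antidiagonal_eq_sum_range_succ (expLogTerm F), coeff_X]
    · change expLogCoeff F m = _
      rcases m with _ | m
      · rw [expLogCoeff_zero, pow_zero, if_pos rfl]
      · rw [expLogCoeff_succ, if_neg (Nat.one_lt_pow m.succ_ne_zero (one_lt_rr F)).ne']
    · intro j _ hj
      rw [coeff_logC_pow_rr_pow, if_neg (by simpa using hj), zero_div]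
  · push Not at hn
    rw [coeff_X, if_neg (by simpa using hn 0)]
    exact sum_eq_zero fun j _ => by rw [coeff_logC_pow_rr_pow_of_forall_ne F j hn, zero_div]

lemma X_mul_logCdivZ : X * logCdivZ F = logC F := by
  ext (_ | n)
  · simp [coeff_logC_of_forall_ne F fun k => (pow_pos (one_lt_rr F).le k).ne]
  · rw [coeff_succ_X_mul, logCdivZ, coeff_mk]

lemma coeff_logC_pow_of_lt {n k : ℕ} (hnk : n < k) : coeff n (logC F ^ k) = 0 := by
  refine X_pow_dvd_iff.mp (pow_dvd_pow_of_dvd ?_ k) n hnk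
  exact ⟨_, (X_mul_logCdivZ F).symm⟩

-- `z / log_C(z) = Σ_j log_C(z) ^ (r ^ j - 1) / D_j`; only `j ≤ n` contribute to the coefficient
-- of `z ^ n`, as `log_C(z) ^ (r ^ j - 1)` has order `r ^ j - 1 ≥ j`.
def zDivLogC : (K F)⟦X⟧ :=
  mk fun n => ∑ j ∈ range (n + 1), coeff n (logC F ^ (rr F ^ j - 1)) / D F j

lemma coeff_zDivLogC {n N : ℕ} (hnN : n ≤ N) :
    coeff n (zDivLogC F) = ∑ j ∈ range (N + 1), coeff n (logC F ^ (rr F ^ j - 1)) / D F j := by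
  rw [zDivLogC, coeff_mk]
  refine sum_subset (range_subset_range.mpr (by omega)) fun j _ hj => ?_
  have : n < rr F ^ j - 1 := by
    have := lt_rr_pow F j
    simp only [mem_range, not_lt] at hj
    omega
  rw [coeff_logC_pow_of_lt F this, zero_div]

lemma logC_mul_zDivLogC : logC F * zDivLogC F = X := by
  ext n
  calc coeff n (logC F * zDivLogC F)
      = ∑ j ∈ range (n + 1), (∑ p ∈ antidiagonal n,
          coeff p.1 (logC F) * coeff p.2 (logC F ^ (rr F ^ j - 1))) / D F j := by
        simp only [coeff_mul, sum_div, mul_div_assoc]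
        rw [sum_comm]
        refine sum_congr rfl fun p hp => ?_
        rw [coeff_zDivLogC F (HasAntidiagonal.antidiagonal.snd_le hp), mul_sum]
    _ = ∑ j ∈ range (n + 1), coeff n (logC F ^ rr F ^ j) / D F j := by
        refine sum_congr rfl fun j _ => ?_
        rw [← coeff_mul, ← pow_succ',
          Nat.sub_add_cancel (Nat.one_le_pow j _ (zero_lt_one.trans (one_lt_rr F)))]
    _ = coeff n X := sum_coeff_logC_pow_rr_pow_div_D F n

lemma logCdivZ_mul_zDivLogC : logCdivZ F * zDivLogC F = 1 := by
  refine mul_left_cancel₀ (X_ne_zero (R := K F)) ?_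
  rw [← mul_assoc, X_mul_logCdivZ, logC_mul_zDivLogC, mul_one]

lemma Cf_rr_pow_sub_one (i : ℕ) :
    Cf F (rr F ^ i - 1) = ∏ j ∈ range i, D F j ^ (rr F - 1) := by
  have hr := zero_lt_one.trans (one_lt_rr F)
  have hsub : range i ⊆ range (rr F ^ i - 1 + 1) :=
    range_subset_range.mpr (by have := lt_rr_pow F i; omega)
  rw [Cf, ← prod_subset hsub fun j _ hj => by
    rw [Nat.pow_sub_one_div_pow_mod hr, if_neg (by simpa using hj), pow_zero]]
  exact prod_congr rfl fun j hj => by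
    rw [Nat.pow_sub_one_div_pow_mod hr, if_pos (mem_range.mp hj)]

lemma D_eq_L_mul_prod (i : ℕ) : D F i = L F i * ∏ j ∈ range i, D F j ^ (rr F - 1) := by
  induction i with
  | zero => simp [D, L]
  | succ k ih =>
    rw [D, L, prod_range_succ, ← pow_sub_one_mul (one_lt_rr F).ne_bot, ih]
    ring

lemma D_eq_L_mul_Cf (i : ℕ) : D F i = L F i * Cf F (rr F ^ i - 1) := by
  rw [Cf_rr_pow_sub_one, D_eq_L_mul_prod]

/-- Theorem 1: `CC_n = Σ_{j ≥ 0, r^j - 1 ≤ n} (1/L_j) · S1_C(n, r^j - 1)`.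
(Any `j` with `r^j - 1 ≤ n` satisfies `j ≤ n` since `r ≥ 2`, so the sum over
`j ∈ range (n+1)` filtered by `r^j - 1 ≤ n` is exactly the sum in question.) -/
theorem cauchyCarlitz_eq_sum_stirlingCarlitzFirst
    (CC : ℕ → K F) (S1C : ℕ → ℕ → K F)
    (hCC : (PowerSeries.mk fun n => CC n / Cf F n) * logCdivZ F = 1)
    (hS1C : ∀ n k : ℕ,
      PowerSeries.coeff n (logC F ^ k) / Cf F k = S1C n k / Cf F n)
    (n : ℕ) :
    CC n = ∑ j ∈ (Finset.range (n + 1)).filter (fun j => (rr F) ^ j - 1 ≤ n),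
      (1 / L F j) * S1C n ((rr F) ^ j - 1) := by
  have hinv : (mk fun n => CC n / Cf F n) = zDivLogC F :=
    left_inv_eq_right_inv hCC (logCdivZ_mul_zDivLogC F)
  have hCCn : CC n = coeff n (zDivLogC F) * Cf F n := by
    rw [← hinv, coeff_mk, div_mul_cancel₀ _ (Cf_ne_zero F n)]
  have hS1Cn (k : ℕ) : S1C n k = coeff n (logC F ^ k) / Cf F k * Cf F n := by
    rw [hS1C, div_mul_cancel₀ _ (Cf_ne_zero F n)]
  simp_rw [hCCn, zDivLogC, coeff_mk, hS1Cn, sum_mul]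
  rw [sum_filter_of_ne fun j _ hj => ?_]
  · exact sum_congr rfl fun j _ => by rw [D_eq_L_mul_Cf]; ring
  · contrapose! hj
    rw [coeff_logC_pow_of_lt F hj, zero_div, zero_mul, mul_zero]
end
end

section
/- For every integer n ≥ 1, the n-th Cauchy number satisfies c_n = (−1)^n · n! · Σ_{k=1}^{n} (−1)^k Σ 1/(i_1 ⋯ i_k), where the inner sum runs over all k-tuples of integers i_1, …, i_k ≥ 2 with i_1 + ⋯ + i_k = n + k. -/
open scoped Classical
open PowerSeries Finset

noncomputable section

/-- The formal power series `log(1+z) = Σ_{m ≥ 1} (-1)^{m-1} z^m / m` in `ℚ⟦z⟧`. -/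
def log1p : PowerSeries ℚ :=
  PowerSeries.mk fun m => if m = 0 then 0 else (-1 : ℚ) ^ (m - 1) / m

/-- The formal power series `log(1+z)/z` in `ℚ⟦z⟧`. -/
def log1pDivZ : PowerSeries ℚ :=
  PowerSeries.mk fun n => PowerSeries.coeff (n + 1) log1p

/-- The formal power series `-log(1-t) = Σ_{m ≥ 1} t^m / m` in `ℚ⟦t⟧`. -/
def negLog1m : PowerSeries ℚ :=
  PowerSeries.mk fun m => if m = 0 then 0 else 1 / (m : ℚ)

/-!
Write `log(1+z)/z = 1 - f` with `f(0) = 0`. The inverse of `1 - f` is the geometric series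
`Σ_k f^k`, and only `k ≤ n` contributes to the coefficient of `z^n`. Since
`z f = z - log(1+z) = Σ_{i ≥ 2} (-1)^i z^i / i`, the coefficient of `z^n` in `f^k` is that of
`z^(n+k)` in `(z f)^k`, which expands as the sum of `Π_t (-1)^(i_t) / i_t` over the tuples
`(i_1, …, i_k)` with `i_t ≥ 2` and `Σ_t i_t = n + k`.
-/

namespace PowerSeries

variable {R : Type*}

theorem coeff_prod_eq_sum_piAntidiag [CommSemiring R] {ι : Type*} [DecidableEq ι]
    (f : ι → R⟦X⟧) (d : ℕ) (s : Finset ι) :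
    coeff d (∏ j ∈ s, f j) = ∑ l ∈ piAntidiag s d, ∏ i ∈ s, coeff (l i) (f i) := by
  rw [coeff_prod, finsuppAntidiag, sum_map]
  exact sum_attach _ fun l : ι → ℕ => ∏ i ∈ s, coeff (l i) (f i)

theorem coeff_pow_eq_sum_tuples_of_coeff_eq_zero [CommSemiring R] (g : R⟦X⟧) {a : ℕ}
    (hg : ∀ j < a, coeff j g = 0) (k m : ℕ) :
    coeff m (g ^ k) = ∑ i ∈ (Fintype.piFinset fun _ : Fin k => Icc a m).filter
      (fun i => ∑ t, i t = m), ∏ t, coeff (i t) g := by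
  rw [← Fin.prod_const, coeff_prod_eq_sum_piAntidiag]
  refine (sum_subset (fun i hi => ?_) fun i hi hi' => ?_).symm
  · simp only [mem_filter, mem_piAntidiag, mem_univ, implies_true, and_true] at hi ⊢
    exact hi.2
  · simp only [mem_piAntidiag, mem_univ, implies_true, and_true] at hi
    obtain ⟨t, ht⟩ : ∃ t, i t < a := by
      by_contra! hge
      refine hi' (mem_filter.2 ⟨Fintype.mem_piFinset.2 fun t => mem_Icc.2 ⟨hge t, ?_⟩, hi⟩)
      exact hi ▸ single_le_sum (fun _ _ => Nat.zero_le _) (mem_univ t)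
    exact prod_eq_zero (mem_univ t) (hg _ ht)

theorem coeff_eq_sum_coeff_pow_of_mul_one_sub_eq_one [CommRing R] {A f : R⟦X⟧}
    (h : A * (1 - f) = 1) (hf : constantCoeff f = 0) (n : ℕ) :
    coeff n A = ∑ k ∈ range (n + 1), coeff n (f ^ k) := by
  have hgeom : ∑ k ∈ range (n + 1), f ^ k = A - A * f ^ (n + 1) := by
    calc ∑ k ∈ range (n + 1), f ^ k = A * ((1 - f) * ∑ k ∈ range (n + 1), f ^ k) := by
          rw [← mul_assoc, h, one_mul]
      _ = A - A * f ^ (n + 1) := by rw [mul_neg_geom_sum, mul_sub, mul_one]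
  have hhigh : coeff n (A * f ^ (n + 1)) = 0 :=
    X_pow_dvd_iff.1 (dvd_mul_of_dvd_right (pow_dvd_pow_of_dvd (X_dvd_iff.2 hf) _) A) n
      n.lt_succ_self
  rw [← map_sum, hgeom, map_sub, hhigh, sub_zero]

end PowerSeries

theorem X_mul_log1pDivZ : X * log1pDivZ = log1p := by
  ext (_ | m)
  · simp [log1p]
  · rw [coeff_succ_X_mul, log1pDivZ, coeff_mk]

theorem coeff_X_sub_log1p (j : ℕ) :
    coeff j (X - log1p) = if 2 ≤ j then (-1 : ℚ) ^ j / j else 0 := by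
  rcases j with _ | _ | j
  · simp [log1p]
  · simp [log1p, coeff_X]
  · simp [log1p, coeff_X, pow_succ, neg_div]

def sumInvProdTuples (m k : ℕ) : ℚ :=
  ∑ i ∈ (Fintype.piFinset fun _ : Fin k => Icc 2 m).filter (fun i => ∑ t, i t = m),
    1 / ∏ t, (i t : ℚ)

theorem coeff_pow_X_sub_log1p (k m : ℕ) :
    coeff m ((X - log1p) ^ k) = (-1 : ℚ) ^ m * sumInvProdTuples m k := by
  rw [coeff_pow_eq_sum_tuples_of_coeff_eq_zero _ (a := 2)
    (fun j hj => by rw [coeff_X_sub_log1p, if_neg hj.not_ge]), sumInvProdTuples, mul_sum]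
  refine sum_congr rfl fun i hi => ?_
  simp only [mem_filter, Fintype.mem_piFinset, mem_Icc] at hi
  rw [prod_congr rfl fun t _ => by rw [coeff_X_sub_log1p, if_pos (hi.1 t).1], prod_div_distrib,
    prod_pow_eq_pow_sum, hi.2, div_eq_mul_one_div]

/-- Theorem 4: for `n ≥ 1`,
`c_n = (-1)^n n! Σ_{k=1}^n (-1)^k Σ_{i_1,…,i_k ≥ 2, i_1+⋯+i_k = n+k} 1/(i_1 ⋯ i_k)`.
(Each `i_t` in the inner sum satisfies `i_t ≤ n + k`, so tuples drawn from `Icc 2 (n+k)`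
and filtered by the sum condition are exactly the tuples in question.) -/
theorem cauchy_eq_sum_over_tuples
    (c : ℕ → ℚ)
    (hc : (PowerSeries.mk fun n => c n / n.factorial) * log1pDivZ = 1)
    (n : ℕ) (hn : 1 ≤ n) :
    c n = (-1 : ℚ) ^ n * n.factorial * ∑ k ∈ Finset.Icc 1 n, (-1 : ℚ) ^ k *
      ∑ i ∈ (Fintype.piFinset fun _ : Fin k => Finset.Icc 2 (n + k)).filter
          (fun i => ∑ t, i t = n + k),
        1 / ∏ t, (i t : ℚ) := by
  set f := 1 - log1pDivZ
  have hinv : (PowerSeries.mk fun n => c n / n.factorial) * (1 - f) = 1 := by simpa [f] using hc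
  have hf : constantCoeff f = 0 := by simp [f, log1pDivZ, log1p, ← coeff_zero_eq_constantCoeff]
  have hXf : X * f = X - log1p := by rw [mul_sub, mul_one, X_mul_log1pDivZ]
  have key : c n / n.factorial = ∑ k ∈ Icc 1 n, (-1 : ℚ) ^ (n + k) * sumInvProdTuples (n + k) k :=
    calc c n / n.factorial = coeff n (PowerSeries.mk fun n => c n / n.factorial) := by
          rw [coeff_mk]
      _ = ∑ k ∈ range (n + 1), coeff n (f ^ k) :=
          coeff_eq_sum_coeff_pow_of_mul_one_sub_eq_one hinv hf n
      _ = ∑ k ∈ Icc 1 n, coeff n (f ^ k) := by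
          rw [range_eq_Ico, sum_eq_sum_Ico_succ_bot n.succ_pos, pow_zero, coeff_one,
            if_neg (by omega), zero_add, Nat.succ_eq_add_one, Ico_add_one_right_eq_Icc]
      _ = _ := sum_congr rfl fun k _ => by
          rw [← coeff_X_pow_mul, ← mul_pow, hXf, coeff_pow_X_sub_log1p]
  rw [div_eq_iff (by positivity)] at key
  rw [key, sum_mul, mul_sum]
  exact sum_congr rfl fun k _ => by rw [pow_add, sumInvProdTuples]; ring
end
end

section
/- For all integers n ≥ 1 and m ≥ 1, the n-th Cauchy number of order m satisfies c_n^{(m)} = (−1)^n Σ_{k=1}^{n} (−1)^k Σ [ multinomial(n; i_1, …, i_k) / (binom(i_1+m, m) ⋯ binom(i_k+m, m)) ] · S1(i_1+m, m) ⋯ S1(i_k+m, m), where the inner sum runs over all k-tuples of integers i_1, …, i_k ≥ 1 with i_1 + ⋯ + i_k = n, multinomial(n; i_1,…,i_k) = n!/(i_1! ⋯ i_k!), and S1 denotes the unsigned Stirling numbers of the first kind. -/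
/-!
Write `(log(1+z)/z)^m = 1 + G` with `G(0) = 0`. The inverse series is `Σ_k (-G)^k`, and the
coefficient of `z^n` in `G^k` is a sum over the compositions of `n` into `k` positive parts of
products of coefficients of `G`. Since `log(1+z) = -(-log(1-t))|_{t=-z}`, the coefficient of `z^j`
in `(log(1+z)/z)^m` is `(-1)^j` times that of `t^(j+m)` in `(-log(1-t))^m`, i.e.
`(-1)^j S1(j+m,m) m!/(j+m)! = (-1)^j S1(j+m,m) / (j! C(j+m,m))`; the signs multiply to `(-1)^n`.
-/

open scoped Classical
open PowerSeries Finset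

noncomputable section

def compositionTuples (k n : ℕ) : Finset (Fin k → ℕ) :=
  (Fintype.piFinset fun _ : Fin k => Icc 1 n).filter (fun i => ∑ t, i t = n)

lemma mem_compositionTuples {k n : ℕ} {i : Fin k → ℕ} :
    i ∈ compositionTuples k n ↔ (∀ t, 1 ≤ i t) ∧ ∑ t, i t = n := by
  simp only [compositionTuples, mem_filter, Fintype.mem_piFinset, mem_Icc]
  refine ⟨fun ⟨hi, hsum⟩ => ⟨fun t => (hi t).1, hsum⟩,
    fun ⟨hpos, hsum⟩ => ⟨fun t => ⟨hpos t, ?_⟩, hsum⟩⟩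
  rw [← hsum]
  exact single_le_sum (fun _ _ => Nat.zero_le _) (mem_univ t)

namespace PowerSeries

variable {R : Type*}

lemma coeff_pow_eq_sum_compositionTuples [CommSemiring R] {G : R⟦X⟧}
    (hG : constantCoeff G = 0) (k n : ℕ) :
    coeff n (G ^ k) = ∑ i ∈ compositionTuples k n, ∏ t, coeff (i t) G := by
  have hprod : G ^ k = ∏ _t : Fin k, G := by simp
  have htuples :
      compositionTuples k n = (piAntidiag univ n).filter (fun i => ∀ t, 1 ≤ i t) := by
    ext i
    simp [mem_compositionTuples, and_comm]
  rw [hprod, coeff_prod, finsuppAntidiag, sum_map]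
  refine (sum_attach (piAntidiag univ n) (fun i => ∏ t, coeff (i t) G)).trans ?_
  rw [htuples, sum_filter_of_ne]
  intro i _ hne t
  by_contra! hit
  exact hne (prod_eq_zero (mem_univ t) (by simp [Nat.lt_one_iff.mp hit, hG]))

lemma coeff_eq_sum_pow_of_mul_one_add_eq_one [CommRing R] {A G : R⟦X⟧}
    (hAG : A * (1 + G) = 1) (hG : constantCoeff G = 0) (n : ℕ) :
    coeff n A = ∑ k ∈ range (n + 1), (-1 : R) ^ k * coeff n (G ^ k) := by
  set S := ∑ k ∈ range (n + 1), (-G) ^ k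
  have hgeom : A = S + A * (-G) ^ (n + 1) := by
    have := geom_sum_mul_neg (-G) (n + 1)
    linear_combination S * hAG - A * this
  have htail : coeff n (A * (-G) ^ (n + 1)) = 0 := by
    refine X_pow_dvd_iff.mp (Dvd.dvd.mul_left (pow_dvd_pow_of_dvd ?_ _) A) n n.lt_succ_self
    exact X_dvd_iff.mpr (by simp [hG])
  rw [hgeom, map_add, htail, add_zero, map_sum]
  refine sum_congr rfl fun k _ => ?_
  rw [neg_pow, show (-1 : R⟦X⟧) ^ k = C ((-1) ^ k) by simp, coeff_C_mul]

lemma coeff_eq_sum_compositionTuples_of_mul_eq_one [CommRing R] {A F : R⟦X⟧} (hAF : A * F = 1)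
    (hF : constantCoeff F = 1) {n : ℕ} (hn : n ≠ 0) :
    coeff n A =
      ∑ k ∈ Icc 1 n, (-1 : R) ^ k * ∑ i ∈ compositionTuples k n, ∏ t, coeff (i t) F := by
  have hG : constantCoeff (F - 1) = 0 := by rw [map_sub, hF, map_one, sub_self]
  rw [coeff_eq_sum_pow_of_mul_one_add_eq_one (by rwa [add_sub_cancel]) hG, range_eq_Ico,
    sum_eq_sum_Ico_succ_bot (show 0 < n + 1 from n.succ_pos), pow_zero, pow_zero, one_mul,
    coeff_one, if_neg hn, zero_add, zero_add, Ico_add_one_right_eq_Icc]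
  refine sum_congr rfl fun k _ => ?_
  rw [coeff_pow_eq_sum_compositionTuples hG]
  refine congrArg _ (sum_congr rfl fun i hi => prod_congr rfl fun t _ => ?_)
  have hpos : i t ≠ 0 := Nat.one_le_iff_ne_zero.mp ((mem_compositionTuples.mp hi).1 t)
  rw [map_sub, coeff_one, if_neg hpos, sub_zero]

end PowerSeries

lemma log1p_eq_X_mul_log1pDivZ : log1p = X * log1pDivZ := by
  ext (_ | j)
  · simp [log1p, coeff_zero_eq_constantCoeff]
  · rw [coeff_succ_X_mul, log1pDivZ, coeff_mk]

lemma log1p_eq_neg_rescale_negLog1m : log1p = -rescale (-1) negLog1m := by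
  ext (_ | j) <;> rw [map_neg, coeff_rescale]
  · simp [log1p, negLog1m]
  · simp only [log1p, negLog1m, coeff_mk, Nat.succ_ne_zero, if_false, Nat.add_sub_cancel]
    push_cast
    ring

lemma constantCoeff_log1pDivZ : constantCoeff log1pDivZ = 1 := by
  simp [log1pDivZ, log1p]

lemma coeff_log1pDivZ_pow (m j : ℕ) :
    coeff j (log1pDivZ ^ m) = (-1) ^ j * coeff (j + m) (negLog1m ^ m) := by
  have hshift : coeff (j + m) (log1p ^ m) = coeff j (log1pDivZ ^ m) := by
    rw [log1p_eq_X_mul_log1pDivZ, mul_pow, coeff_X_pow_mul]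
  have hsign : (-1 : ℚ) ^ m * (-1) ^ (j + m) = (-1) ^ j := by
    rw [← pow_add, add_left_comm, pow_add, ← two_mul, pow_mul, neg_one_sq, one_pow, mul_one]
  rw [← hshift, log1p_eq_neg_rescale_negLog1m, neg_pow, ← map_pow,
    show (-1 : ℚ⟦X⟧) ^ m = C ((-1) ^ m) by simp, coeff_C_mul, coeff_rescale, ← mul_assoc,
    hsign]

lemma coeff_log1pDivZ_pow_eq_stirling (S1 : ℕ → ℕ → ℚ) (m : ℕ)
    (hS1 : ∀ n, coeff n (negLog1m ^ m) / m.factorial = S1 n m / n.factorial) (j : ℕ) :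
    coeff j (log1pDivZ ^ m) =
      (-1) ^ j * (S1 (j + m) m / (j.factorial * ((j + m).choose m : ℚ))) := by
  have h := hS1 (j + m)
  rw [coeff_log1pDivZ_pow, ← Nat.choose_symm_add, Nat.cast_add_choose]
  field_simp at h ⊢
  rw [h]

theorem cauchyHigherOrder_eq_sum_over_tuples_general
    (cho : ℕ → ℕ → ℚ) (S1 : ℕ → ℕ → ℚ)
    (hcho : ∀ m : ℕ,
      (PowerSeries.mk fun n => cho m n / n.factorial) * log1pDivZ ^ m = 1)
    (hS1 : ∀ n k : ℕ,
      PowerSeries.coeff n (negLog1m ^ k) / k.factorial = S1 n k / n.factorial)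
    (n m : ℕ) (hn : 1 ≤ n) :
    cho m n = (-1 : ℚ) ^ n * ∑ k ∈ Finset.Icc 1 n, (-1 : ℚ) ^ k *
      ∑ i ∈ (Fintype.piFinset fun _ : Fin k => Finset.Icc 1 n).filter
          (fun i => ∑ t, i t = n),
        ((n.factorial : ℚ) / ∏ t, ((i t).factorial : ℚ)) /
            (∏ t, (Nat.choose (i t + m) m : ℚ)) *
          ∏ t, S1 (i t + m) m := by
  have hexpand := coeff_eq_sum_compositionTuples_of_mul_eq_one (hcho m)
    (by rw [map_pow, constantCoeff_log1pDivZ, one_pow]) (Nat.one_le_iff_ne_zero.mp hn)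
  rw [coeff_mk, div_eq_iff (by positivity)] at hexpand
  rw [hexpand, sum_mul, mul_sum]
  refine sum_congr rfl fun k _ => ?_
  rw [mul_assoc, sum_mul, mul_sum, mul_sum, mul_sum]
  refine sum_congr rfl fun i hi => ?_
  have hprod : ∏ t, coeff (i t) (log1pDivZ ^ m) =
      (-1) ^ n * ∏ t, S1 (i t + m) m / ((i t).factorial * ((i t + m).choose m : ℚ)) := by
    simp only [coeff_log1pDivZ_pow_eq_stirling S1 m (hS1 · m), prod_mul_distrib,
      prod_pow_eq_pow_sum, (mem_compositionTuples.mp hi).2]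
  rw [hprod, prod_div_distrib, prod_mul_distrib]
  ring

/-- Proposition 3: for `n, m ≥ 1`, the Cauchy number of order `m` satisfies
`c_n^{(m)} = (-1)^n Σ_{k=1}^n (-1)^k Σ_{i_1,…,i_k ≥ 1, i_1+⋯+i_k = n}
  (n!/(i_1!⋯i_k!)) / (C(i_1+m, m)⋯C(i_k+m, m)) · S1(i_1+m, m)⋯S1(i_k+m, m)`. -/
theorem cauchyHigherOrder_eq_sum_over_tuples
    (cho : ℕ → ℕ → ℚ) (S1 : ℕ → ℕ → ℚ)
    (hcho : ∀ m : ℕ,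
      (PowerSeries.mk fun n => cho m n / n.factorial) * log1pDivZ ^ m = 1)
    (hS1 : ∀ n k : ℕ,
      PowerSeries.coeff n (negLog1m ^ k) / k.factorial = S1 n k / n.factorial)
    (n m : ℕ) (hn : 1 ≤ n) (hm : 1 ≤ m) :
    cho m n = (-1 : ℚ) ^ n * ∑ k ∈ Finset.Icc 1 n, (-1 : ℚ) ^ k *
      ∑ i ∈ (Fintype.piFinset fun _ : Fin k => Finset.Icc 1 n).filter
          (fun i => ∑ t, i t = n),
        ((n.factorial : ℚ) / ∏ t, ((i t).factorial : ℚ)) /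
            (∏ t, (Nat.choose (i t + m) m : ℚ)) *
          ∏ t, S1 (i t + m) m :=
  cauchyHigherOrder_eq_sum_over_tuples_general cho S1 hcho hS1 n m hn
end
end

section
/- For all integers n ≥ 1 and m ≥ 1, the n-th Cauchy number of order m satisfies c_n^{(m)} = (−1)^n Σ_{k=1}^{n} (−1)^k · binom(n+1, k+1)/binom(n+mk, n) · S1(n+mk, mk), where S1 denotes the unsigned Stirling numbers of the first kind. -/
/-!
Substituting `z ↦ -z` turns `log(1+z)/z` into `h(t) = -log(1-t)/t`, so
`G(t) = Σ (-1)^n c_n^{(m)} t^n/n!` is the inverse of `w = h^m`. As `w` has constant term `1`,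
`(1 - w)^{n+1} G` vanishes to order `n + 1`; expanding the binomial and using `w^{k+1} G = w^k`
expresses `[t^n] G` through the coefficients `[t^n] w^k = [t^{n+mk}] (-log(1-t))^{mk}`, which are
Stirling numbers of the first kind up to factorials.
-/

open scoped Classical
open PowerSeries Finset

noncomputable section

theorem one_sub_pow_succ_mul_eq_sub_sum {R : Type*} [CommRing R] {g w : R} (hgw : g * w = 1)
    (n : ℕ) :
    (1 - w) ^ (n + 1) * g =
      g - ∑ k ∈ range (n + 1), (-1) ^ k * ((n + 1).choose (k + 1) : R) * w ^ k := by
  have hshift (k : ℕ) : w ^ (k + 1) * g = w ^ k := by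
    rw [pow_succ, mul_assoc, mul_comm w, hgw, mul_one]
  rw [sub_eq_neg_add, add_pow, sum_range_succ', add_mul, sum_mul, sub_eq_add_neg,
    ← sum_neg_distrib, add_comm]
  congr 1
  · simp
  · refine sum_congr rfl fun k _ => ?_
    linear_combination (-(-1) ^ k * ((n + 1).choose (k + 1) : R)) * hshift k

theorem PowerSeries.coeff_eq_sum_coeff_pow_of_mul_eq_one {R : Type*} [CommRing R] {g w : R⟦X⟧}
    (hgw : g * w = 1) (hw : constantCoeff w = 1) (n : ℕ) :
    coeff n g =
      ∑ k ∈ range (n + 1), (-1) ^ k * ((n + 1).choose (k + 1) : R) * coeff n (w ^ k) := by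
  have hX : X ∣ 1 - w := X_dvd_iff.mpr (by simp [hw])
  have hvanish : coeff n ((1 - w) ^ (n + 1) * g) = 0 :=
    X_pow_dvd_iff.mp ((pow_dvd_pow_of_dvd hX _).mul_right g) n n.lt_succ_self
  rw [one_sub_pow_succ_mul_eq_sub_sum hgw, map_sub, map_sum, sub_eq_zero] at hvanish
  rw [hvanish]
  refine sum_congr rfl fun k _ => ?_
  rw [← coeff_C_mul]
  simp

def negLog1mDivX : ℚ⟦X⟧ :=
  mk fun n => 1 / ((n : ℚ) + 1)

theorem negLog1m_eq_X_mul_negLog1mDivX : negLog1m = X * negLog1mDivX := by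
  ext (_ | n)
  · simp [negLog1m]
  · simp [negLog1m, negLog1mDivX, coeff_succ_X_mul]

theorem rescale_neg_one_log1pDivZ : rescale (-1 : ℚ) log1pDivZ = negLog1mDivX := by
  ext n
  simp only [coeff_rescale, log1pDivZ, log1p, negLog1mDivX, coeff_mk, Nat.succ_ne_zero, if_false,
    Nat.add_sub_cancel]
  rw [mul_div_assoc', ← pow_add, ← two_mul, pow_mul]
  norm_num

theorem constantCoeff_negLog1mDivX : constantCoeff negLog1mDivX = 1 := by
  simp [negLog1mDivX, ← coeff_zero_eq_constantCoeff_apply]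

theorem coeff_negLog1mDivX_pow (n j : ℕ) :
    coeff n (negLog1mDivX ^ j) = coeff (n + j) (negLog1m ^ j) := by
  rw [negLog1m_eq_X_mul_negLog1mDivX, mul_pow, coeff_X_pow_mul]

theorem cauchyHigherOrder_eq_sum_stirlingFirst_general
    (cho : ℕ → ℕ → ℚ) (S1 : ℕ → ℕ → ℚ)
    (hcho : ∀ m : ℕ,
      (PowerSeries.mk fun n => cho m n / n.factorial) * log1pDivZ ^ m = 1)
    (hS1 : ∀ n k : ℕ,
      PowerSeries.coeff n (negLog1m ^ k) / k.factorial = S1 n k / n.factorial)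
    (n m : ℕ) (hn : 1 ≤ n) :
    cho m n = (-1 : ℚ) ^ n * ∑ k ∈ Finset.Icc 1 n,
      (-1 : ℚ) ^ k * ((Nat.choose (n + 1) (k + 1) : ℚ) / (Nat.choose (n + m * k) n : ℚ)) *
        S1 (n + m * k) (m * k) := by
  have hinv : rescale (-1 : ℚ) (mk fun n => cho m n / n.factorial) * negLog1mDivX ^ m = 1 := by
    rw [← rescale_neg_one_log1pDivZ, ← map_pow, ← map_mul, hcho m, map_one]
  have hw : constantCoeff (negLog1mDivX ^ m) = 1 := by simp [constantCoeff_negLog1mDivX]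
  have hcoeff_w_pow (k : ℕ) : coeff n ((negLog1mDivX ^ m) ^ k) =
      S1 (n + m * k) (m * k) / (n + m * k).factorial * (m * k).factorial := by
    rw [← pow_mul, coeff_negLog1mDivX_pow, ← hS1, div_mul_cancel₀ _ (by positivity)]
  have hchoose (k : ℕ) : ((n + m * k).choose n : ℚ)⁻¹ =
      n.factorial * (m * k).factorial / (n + m * k).factorial := by
    rw [Nat.cast_add_choose, inv_div]
  have hsum := coeff_eq_sum_coeff_pow_of_mul_eq_one hinv hw n
  rw [coeff_rescale, coeff_mk] at hsum
  -- the `k = 0` term is `(n + 1) • coeff n 1`, which vanishes since `n ≠ 0`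
  rw [range_eq_Ico, sum_eq_sum_Ico_succ_bot (by omega : 0 < n + 1), zero_add,
    Ico_add_one_right_eq_Icc, pow_zero, pow_zero, coeff_one, if_neg (by omega), mul_zero,
    zero_add] at hsum
  calc cho m n = (-1) ^ n * (n.factorial * ((-1) ^ n * (cho m n / n.factorial))) := by
        field_simp
        rw [← pow_mul, Even.neg_one_pow ⟨n, by ring⟩, mul_one]
    _ = _ := by
        rw [hsum, mul_sum]
        congr 1
        refine sum_congr rfl fun k _ => ?_
        rw [hcoeff_w_pow, div_eq_mul_inv _ ((n + m * k).choose n : ℚ), hchoose]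
        ring

/-- Proposition 5: for `n, m ≥ 1`, the Cauchy number of order `m` satisfies
`c_n^{(m)} = (-1)^n Σ_{k=1}^n (-1)^k (C(n+1, k+1) / C(n+mk, n)) · S1(n+mk, mk)`. -/
theorem cauchyHigherOrder_eq_sum_stirlingFirst
    (cho : ℕ → ℕ → ℚ) (S1 : ℕ → ℕ → ℚ)
    (hcho : ∀ m : ℕ,
      (PowerSeries.mk fun n => cho m n / n.factorial) * log1pDivZ ^ m = 1)
    (hS1 : ∀ n k : ℕ,
      PowerSeries.coeff n (negLog1m ^ k) / k.factorial = S1 n k / n.factorial)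
    (n m : ℕ) (hn : 1 ≤ n) (hm : 1 ≤ m) :
    cho m n = (-1 : ℚ) ^ n * ∑ k ∈ Finset.Icc 1 n,
      (-1 : ℚ) ^ k * ((Nat.choose (n + 1) (k + 1) : ℚ) / (Nat.choose (n + m * k) n : ℚ)) *
        S1 (n + m * k) (m * k) :=
  cauchyHigherOrder_eq_sum_stirlingFirst_general cho S1 hcho hS1 n m hn

end
end
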